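/- Let α, β ≥ 1 and let D = {z ∈ ℂ : |Re z| ≤ α, |Im z| ≤ β} be the closed rectangle. Let g : D → ℂ and let g₀ ∈ ℂ and (g_n)_{n≥1} be complex numbers such that g(τ) = g₀ + ∑_{n≥1} g_n e^{−2π n i τ} + ∑_{n≥1} conj(g_n) e^{2π n i τ} for all τ ∈ D, with both series converging uniformly on D, and suppose there exists a real τ_h ∈ [−α, α] with g(τ_h) = 0. Then for every real τ ∈ [−α, α] one has |g(τ)| ≤ 8 ‖g‖_D e^{−2π β}. -/

import Mathlib

open Filter

/-- The closed rectangle `{z ∈ ℂ : |Re z| ≤ α, |Im z| ≤ β}`. -/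
def rect (α β : ℝ) : Set ℂ := {z : ℂ | |z.re| ≤ α ∧ |z.im| ≤ β}

open Topology Complex ComplexConjugate
open scoped Real

/-!
Integrating `g` along the top edge `Im z = β` against `e^{2πint}` picks out `gₙ e^{2πnβ}`, so
`|gₙ| ≤ ‖g‖_D e^{-2πnβ}`. On the real line every mode has modulus one, hence
`|g(τ)| = |g(τ) - g(τₕ)| ≤ 4 ∑ |gₙ| ≤ 4 ‖g‖_D e^{-2πβ} / (1 - e^{-2πβ}) ≤ 8 ‖g‖_D e^{-2πβ}`.
-/

theorem TendstoUniformlyOn.mul_right_of_norm_le_one {ι α R : Type*} [NormedRing R]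
    {l : Filter ι} {s : Set α} {F : ι → α → R} {f φ : α → R}
    (h : TendstoUniformlyOn F f l s) (hφ : ∀ x ∈ s, ‖φ x‖ ≤ 1) :
    TendstoUniformlyOn (fun i x => F i x * φ x) (fun x => f x * φ x) l s := by
  rw [Metric.tendstoUniformlyOn_iff] at h ⊢
  refine fun ε hε => (h ε hε).mono fun i hi x hx => ?_
  calc dist (f x * φ x) (F i x * φ x) = ‖(f x - F i x) * φ x‖ := by rw [dist_eq_norm, sub_mul]
    _ ≤ ‖f x - F i x‖ * 1 := (norm_mul_le _ _).trans (by gcongr; exact hφ x hx)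
    _ < ε := by rw [mul_one, ← dist_eq_norm]; exact hi x hx

theorem IsCompact.norm_le_biSup {X E : Type*} [TopologicalSpace X] [SeminormedAddGroup E]
    {s : Set X} {f : X → E} {x : X} (hs : IsCompact s) (hf : ContinuousOn f s) (hx : x ∈ s) :
    ‖f x‖ ≤ ⨆ y ∈ s, ‖f y‖ := by
  refine le_ciSup₂ (f := fun y (_ : y ∈ s) => ‖f y‖) ((hs.bddAbove_image hf.norm).mono ?_) x hx
  rintro _ ⟨_, ⟨y, rfl⟩, ⟨hy, rfl⟩⟩
  exact ⟨y, hy, rfl⟩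

theorem sum_Icc_le_two_mul_of_le_geometric {a : ℕ → ℝ} {M r : ℝ} (hM : 0 ≤ M) (hr₀ : 0 ≤ r)
    (hr : r ≤ 1 / 2) (ha : ∀ n, 1 ≤ n → a n ≤ M * r ^ n) (N : ℕ) :
    ∑ n ∈ Finset.Icc 1 N, a n ≤ 2 * M * r := by
  calc ∑ n ∈ Finset.Icc 1 N, a n
      ≤ M * ∑ n ∈ Finset.Ico 1 (N + 1), r ^ n := by
        rw [Finset.mul_sum]
        exact Finset.sum_le_sum fun n hn => ha n (Finset.mem_Icc.mp hn).1
    _ ≤ M * (r ^ 1 / (1 - r)) := by gcongr; exact geom_sum_Ico_le_of_lt_one hr₀ (by linarith)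
    _ ≤ M * (2 * r) := by
        gcongr
        rw [pow_one, div_le_iff₀ (by linarith)]
        nlinarith
    _ = 2 * M * r := by ring

theorem exp_neg_two_pi_mul_le_half {β : ℝ} (hβ : 1 ≤ β) : Real.exp (-(2 * π * β)) ≤ 1 / 2 := by
  have h2 : 2 ≤ Real.exp 1 := by linarith [Real.add_one_le_exp 1]
  calc Real.exp (-(2 * π * β)) ≤ Real.exp (-1) := by
        gcongr; nlinarith [Real.pi_gt_three]
    _ = (Real.exp 1)⁻¹ := Real.exp_neg 1
    _ ≤ 1 / 2 := by rw [one_div]; gcongr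

theorem isCompact_rect (α β : ℝ) : IsCompact (rect α β) := by
  apply Metric.isCompact_of_isClosed_isBounded
  · exact (isClosed_le (continuous_abs.comp continuous_re) continuous_const).inter
      (isClosed_le (continuous_abs.comp continuous_im) continuous_const)
  · refine (Metric.isBounded_closedBall (x := (0 : ℂ)) (r := α + β)).subset fun z hz => ?_
    rw [Metric.mem_closedBall, dist_zero_right]
    exact (norm_le_abs_re_add_abs_im z).trans (add_le_add hz.1 hz.2)

theorem norm_exp_two_pi_natCast_mul_I_mul_ofReal (n : ℕ) (t : ℝ) :
    ‖exp (2 * π * n * I * t)‖ = 1 := by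
  rw [show (2 * π * n * I * t : ℂ) = ((2 * π * n * t : ℝ) : ℂ) * I by push_cast; ring]
  exact norm_exp_ofReal_mul_I _

theorem integral_exp_two_pi_int_mul_I (k : ℤ) :
    ∫ t in (0 : ℝ)..1, exp (2 * π * k * I * t) = if k = 0 then 1 else 0 := by
  split_ifs with hk
  · simp [hk]
  have hc : 2 * π * k * I ≠ 0 := by simp [Real.pi_ne_zero, hk]
  rw [integral_exp_mul_complex hc]
  have hexp : exp (2 * π * k * I) = 1 := by
    rw [show 2 * π * k * I = k * (2 * π * I) by ring, exp_int_mul_two_pi_mul_I]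
  simp [hexp]

theorem integral_exp_mode_mul_exp (k n : ℤ) (y : ℝ) :
    ∫ t in (0 : ℝ)..1, exp (2 * π * k * I * (t + y * I)) * exp (2 * π * n * I * t) =
      if k + n = 0 then exp (-(2 * π * k * y)) else 0 := by
  have hsplit : ∀ t : ℝ, exp (2 * π * k * I * (t + y * I)) * exp (2 * π * n * I * t) =
      exp (-(2 * π * k * y)) * exp (2 * π * (k + n : ℤ) * I * t) := fun t => by
    rw [← exp_add, ← exp_add]
    congr 1
    push_cast
    linear_combination (2 * π * k * y : ℂ) * I_sq
  simp_rw [hsplit, intervalIntegral.integral_const_mul, integral_exp_two_pi_int_mul_I]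
  split_ifs <;> simp

noncomputable def fourierPartialSum (g₀ : ℂ) (c : ℕ → ℂ) (N : ℕ) (z : ℂ) : ℂ :=
  g₀ + ∑ n ∈ Finset.Icc 1 N, c n * exp (-(2 * π * n * I * z))
    + ∑ n ∈ Finset.Icc 1 N, conj (c n) * exp (2 * π * n * I * z)

theorem continuous_fourierPartialSum (g₀ : ℂ) (c : ℕ → ℂ) (N : ℕ) :
    Continuous (fourierPartialSum g₀ c N) := by
  unfold fourierPartialSum
  fun_prop

theorem norm_fourierPartialSum_ofReal_sub_le (g₀ : ℂ) (c : ℕ → ℂ) (N : ℕ) (t : ℝ) :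
    ‖fourierPartialSum g₀ c N t - g₀‖ ≤ 2 * ∑ n ∈ Finset.Icc 1 N, ‖c n‖ := by
  have hA : ‖∑ n ∈ Finset.Icc 1 N, c n * exp (-(2 * π * n * I * t))‖ ≤
      ∑ n ∈ Finset.Icc 1 N, ‖c n‖ :=
    (norm_sum_le _ _).trans_eq <| Finset.sum_congr rfl fun n _ => by
      rw [norm_mul, exp_neg, norm_inv, norm_exp_two_pi_natCast_mul_I_mul_ofReal, inv_one, mul_one]
  have hB : ‖∑ n ∈ Finset.Icc 1 N, conj (c n) * exp (2 * π * n * I * t)‖ ≤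
      ∑ n ∈ Finset.Icc 1 N, ‖c n‖ :=
    (norm_sum_le _ _).trans_eq <| Finset.sum_congr rfl fun n _ => by
      rw [norm_mul, norm_conj, norm_exp_two_pi_natCast_mul_I_mul_ofReal, mul_one]
  rw [fourierPartialSum, add_assoc, add_sub_cancel_left]
  linarith [norm_add_le (∑ n ∈ Finset.Icc 1 N, c n * exp (-(2 * π * n * I * t)))
    (∑ n ∈ Finset.Icc 1 N, conj (c n) * exp (2 * π * n * I * t))]

theorem integral_fourierPartialSum_mul_exp (g₀ : ℂ) (c : ℕ → ℂ) {n N : ℕ} (hn : 1 ≤ n)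
    (hnN : n ≤ N) (y : ℝ) :
    ∫ t in (0 : ℝ)..1, fourierPartialSum g₀ c N (t + y * I) * exp (2 * π * n * I * t) =
      c n * exp (2 * π * n * y) := by
  have hconst : ∫ t in (0 : ℝ)..1, g₀ * exp (2 * π * n * I * t) = 0 := by
    have h := integral_exp_two_pi_int_mul_I n
    push_cast at h
    rw [intervalIntegral.integral_const_mul, h, if_neg (by omega), mul_zero]
  have hneg : ∀ m : ℕ, ∫ t in (0 : ℝ)..1,
      c m * exp (-(2 * π * m * I * (t + y * I))) * exp (2 * π * n * I * t) =
        if n = m then c n * exp (2 * π * n * y) else 0 := fun m => by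
    have h := integral_exp_mode_mul_exp (-m) n y
    simp only [Int.cast_neg, Int.cast_natCast, neg_mul, mul_neg, neg_neg, neg_add_eq_zero,
      Nat.cast_inj] at h
    simp_rw [mul_assoc (c m), intervalIntegral.integral_const_mul, h, eq_comm (a := m)]
    split_ifs with hnm <;> simp [hnm]
  have hpos : ∀ m : ℕ, ∫ t in (0 : ℝ)..1,
      conj (c m) * exp (2 * π * m * I * (t + y * I)) * exp (2 * π * n * I * t) = 0 := fun m => by
    have h := integral_exp_mode_mul_exp m n y
    rw [if_neg (by omega)] at h
    push_cast at h
    simp_rw [mul_assoc (conj (c m)), intervalIntegral.integral_const_mul, h, mul_zero]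
  have hint : ∀ f : ℝ → ℂ, Continuous f → IntervalIntegrable f MeasureTheory.volume 0 1 :=
    fun f hf => hf.intervalIntegrable 0 1
  unfold fourierPartialSum
  simp only [add_mul, Finset.sum_mul]
  rw [intervalIntegral.integral_add (hint _ (by fun_prop)) (hint _ (by fun_prop)),
    intervalIntegral.integral_add (hint _ (by fun_prop)) (hint _ (by fun_prop)),
    intervalIntegral.integral_finsetSum fun m _ => hint _ (by fun_prop),
    intervalIntegral.integral_finsetSum fun m _ => hint _ (by fun_prop)]
  simp only [hconst, hneg, hpos, Finset.sum_ite_eq, Finset.mem_Icc, hn, hnN]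
  simp

theorem coeff_mul_exp_eq_integral {g₀ : ℂ} {c : ℕ → ℂ} {g : ℂ → ℂ} {s : Set ℂ} {y : ℝ}
    (hP : TendstoUniformlyOn (fourierPartialSum g₀ c) g atTop s)
    (hs : ∀ t ∈ Set.Icc (0 : ℝ) 1, (t : ℂ) + y * I ∈ s) {n : ℕ} (hn : 1 ≤ n) :
    c n * exp (2 * π * n * y) = ∫ t in (0 : ℝ)..1, g (t + y * I) * exp (2 * π * n * I * t) := by
  have hline : TendstoUniformlyOn
      (fun N (t : ℝ) => fourierPartialSum g₀ c N (t + y * I) * exp (2 * π * n * I * t))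
      (fun t => g (t + y * I) * exp (2 * π * n * I * t)) atTop (Set.uIcc 0 1) := by
    refine TendstoUniformlyOn.mul_right_of_norm_le_one ?_ fun t _ => ?_
    · rw [Set.uIcc_of_le zero_le_one]
      exact (hP.comp _).mono hs
    · rw [norm_exp_two_pi_natCast_mul_I_mul_ofReal]
  have hcont : ∀ N, Continuous fun t : ℝ =>
      fourierPartialSum g₀ c N (t + y * I) * exp (2 * π * n * I * t) := fun N =>
    ((continuous_fourierPartialSum g₀ c N).comp (by fun_prop)).mul (by fun_prop)
  refine tendsto_nhds_unique (tendsto_const_nhds.congr' ?_)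
    (hline.tendsto_intervalIntegral_of_continuousOn (.of_forall fun N => (hcont N).continuousOn))
  filter_upwards [eventually_ge_atTop n] with N hN
  exact (integral_fourierPartialSum_mul_exp g₀ c hn hN y).symm

theorem norm_coeff_le {g₀ : ℂ} {c : ℕ → ℂ} {g : ℂ → ℂ} {s : Set ℂ} {y M : ℝ}
    (hP : TendstoUniformlyOn (fourierPartialSum g₀ c) g atTop s)
    (hs : ∀ t ∈ Set.Icc (0 : ℝ) 1, (t : ℂ) + y * I ∈ s) (hM : ∀ z ∈ s, ‖g z‖ ≤ M)
    {n : ℕ} (hn : 1 ≤ n) :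
    ‖c n‖ ≤ M * Real.exp (-(2 * π * y)) ^ n := by
  have hint : ‖c n‖ * Real.exp (2 * π * n * y) ≤ M := by
    have h := congrArg norm (coeff_mul_exp_eq_integral hP hs hn)
    rw [norm_mul, show (2 * π * n * y : ℂ) = ((2 * π * n * y : ℝ) : ℂ) by push_cast; ring,
      norm_exp_ofReal] at h
    rw [h]
    refine (intervalIntegral.norm_integral_le_of_norm_le_const (C := M) fun t ht => ?_).trans_eq
      (by simp)
    rw [Set.uIoc_of_le zero_le_one] at ht
    rw [norm_mul, norm_exp_two_pi_natCast_mul_I_mul_ofReal, mul_one]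
    exact hM _ (hs t (Set.Ioc_subset_Icc_self ht))
  rw [← Real.exp_nat_mul, show (n : ℝ) * -(2 * π * y) = -(2 * π * n * y) by ring, Real.exp_neg,
    ← div_eq_mul_inv, le_div_iff₀ (Real.exp_pos _)]
  exact hint

/-- A 1-periodic analytic function on a rectangle which vanishes at a real point
is exponentially small in the height `β` of the rectangle on the whole real
segment: `|g(τ)| ≤ 8 ‖g‖_D e^{−2πβ}` for all real `τ ∈ [−α, α]`. -/
theorem periodic_function_real_bound (α β : ℝ) (hα : 1 ≤ α) (hβ : 1 ≤ β)
    (g : ℂ → ℂ) (g₀ : ℂ) (gn : ℕ → ℂ) (S₁ S₂ : ℂ → ℂ)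
    (hS₁ : TendstoUniformlyOn
      (fun N : ℕ => fun τ : ℂ => ∑ n ∈ Finset.Icc 1 N,
        gn n * Complex.exp (-(2 * Real.pi * (n : ℂ) * Complex.I * τ)))
      S₁ atTop (rect α β))
    (hS₂ : TendstoUniformlyOn
      (fun N : ℕ => fun τ : ℂ => ∑ n ∈ Finset.Icc 1 N,
        (starRingEnd ℂ) (gn n) * Complex.exp (2 * Real.pi * (n : ℂ) * Complex.I * τ))
      S₂ atTop (rect α β))
    (hg : ∀ τ ∈ rect α β, g τ = g₀ + S₁ τ + S₂ τ)
    (hzero : ∃ τh : ℝ, τh ∈ Set.Icc (-α) α ∧ g (τh : ℂ) = 0) :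
    ∀ τ : ℝ, τ ∈ Set.Icc (-α) α →
      ‖g (τ : ℂ)‖ ≤
        8 * (⨆ w ∈ rect α β, ‖g w‖) * Real.exp (-(2 * Real.pi * β)) := by
  intro τ hτ
  obtain ⟨τh, hτh, hgτh⟩ := hzero
  have hreal : ∀ t ∈ Set.Icc (-α) α, (t : ℂ) ∈ rect α β := fun t ht =>
    ⟨by simpa [abs_le] using ht, by simpa using hβ.trans' zero_le_one⟩
  have hline : ∀ t ∈ Set.Icc (0 : ℝ) 1, (t : ℂ) + β * I ∈ rect α β := fun t ht =>
    ⟨by simpa [abs_of_nonneg ht.1] using ht.2.trans hα, by simp [abs_of_pos (by linarith : 0 < β)]⟩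
  have hP : TendstoUniformlyOn (fourierPartialSum g₀ gn) g atTop (rect α β) :=
    ((tendsto_const_nhds.tendstoUniformlyOn_const _).add hS₁ |>.add hS₂).congr_right
      fun z hz => (hg z hz).symm
  have hgM : ∀ z ∈ rect α β, ‖g z‖ ≤ ⨆ w ∈ rect α β, ‖g w‖ := fun z hz =>
    (isCompact_rect α β).norm_le_biSup
      (hP.continuousOn (.of_forall fun N => (continuous_fourierPartialSum g₀ gn N).continuousOn)) hz
  have hcoeff := sum_Icc_le_two_mul_of_le_geometric ((norm_nonneg _).trans (hgM _ (hreal τ hτ)))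
    (Real.exp_pos _).le (exp_neg_two_pi_mul_le_half hβ) fun n hn => norm_coeff_le hP hline hgM hn
  have hlim : Tendsto (fun N => ‖fourierPartialSum g₀ gn N τ - fourierPartialSum g₀ gn N τh‖)
      atTop (𝓝 ‖g τ‖) := by
    simpa [hgτh] using ((hP.tendsto_at (hreal τ hτ)).sub (hP.tendsto_at (hreal τh hτh))).norm
  refine le_of_tendsto' hlim fun N => ?_
  rw [← sub_sub_sub_cancel_right _ _ g₀]
  linarith [norm_sub_le (fourierPartialSum g₀ gn N τ - g₀) (fourierPartialSum g₀ gn N τh - g₀),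
    norm_fourierPartialSum_ofReal_sub_le g₀ gn N τ, norm_fourierPartialSum_ofReal_sub_le g₀ gn N τh,
    hcoeff N]
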